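/- Goodman's inequality for graphons: for every graphon W, t(K_3, W) ≥ t(K_2, W) · (2·t(K_2, W) − 1), where K_2 is the graph consisting of a single edge and K_3 is the triangle; explicitly, ∫_{[0,1]^3} W(x,y)W(y,z)W(z,x) dx dy dz ≥ (∫_{[0,1]^2} W(x,y) dx dy) · (2·∫_{[0,1]^2} W(x,y) dx dy − 1). -/

import Mathlib

open MeasureTheory Set Function

/-- The Lebesgue measure restricted to `[0,1]`. -/
noncomputable abbrev μ01 : MeasureTheory.Measure ℝ :=
  MeasureTheory.volume.restrict (Set.Icc (0:ℝ) 1)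

/-- A graphon: a symmetric measurable function `[0,1]² → [0,1]`
(defined on all of `ℝ²` for convenience). -/
def IsGraphon (W : ℝ → ℝ → ℝ) : Prop :=
  Measurable (Function.uncurry W) ∧ (∀ x y, W x y = W y x) ∧ ∀ x y, W x y ∈ Set.Icc (0:ℝ) 1

/-!
Integrating out `z` from `W(x,y) W(y,z) W(z,x) ≥ W(x,y) (W(y,z) + W(z,x) - 1)`, which is
`(1 - W(y,z)) (1 - W(z,x)) ≥ 0` multiplied by `W(x,y)`, bounds the triangle density below by
`∫∫ W(x,y) (d(x) + d(y) - 1) = 2 ∫ d² - t(K₂)`, where `d(x) = ∫ W(x,y) dy` is the degree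
function. By symmetry of `W` both degree terms give `∫ d²`, and `∫ d² ≥ (∫ d)² = t(K₂)²` by
Cauchy–Schwarz.
-/

section UnitInterval

variable {α : Type*} [MeasurableSpace α] {μ : Measure α} {f : α → ℝ}

lemma memLp_of_mem_unitInterval [IsFiniteMeasure μ] {p : ENNReal} (hf : Measurable f)
    (hf01 : ∀ x, f x ∈ unitInterval) : MemLp f p μ :=
  .of_bound hf.aestronglyMeasurable 1 <| ae_of_all _ fun x => by
    rw [Real.norm_of_nonneg (hf01 x).1]
    exact (hf01 x).2

lemma integrable_of_mem_unitInterval [IsFiniteMeasure μ] (hf : Measurable f)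
    (hf01 : ∀ x, f x ∈ unitInterval) : Integrable f μ :=
  memLp_one_iff_integrable.1 (memLp_of_mem_unitInterval hf hf01)

lemma integral_mem_unitInterval [IsProbabilityMeasure μ] (hf01 : ∀ x, f x ∈ unitInterval) :
    ∫ x, f x ∂μ ∈ unitInterval :=
  ⟨integral_nonneg fun x => (hf01 x).1, by
    simpa using integral_mono_of_nonneg (ae_of_all _ fun x => (hf01 x).1)
      (integrable_const (μ := μ) (1 : ℝ)) (ae_of_all _ fun x => (hf01 x).2)⟩

end UnitInterval

lemma sq_integral_le_integral_sq {Ω : Type*} [MeasurableSpace Ω] {μ : Measure Ω}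
    [IsProbabilityMeasure μ] {f : Ω → ℝ} (hf : MemLp f 2 μ) :
    (∫ x, f x ∂μ) ^ 2 ≤ ∫ x, f x ^ 2 ∂μ := by
  have hvar := ProbabilityTheory.variance_nonneg f μ
  rw [ProbabilityTheory.variance_eq_sub hf] at hvar
  simpa using hvar

lemma integrable_integral_of_mem_unitInterval {α β : Type*} [MeasurableSpace α]
    [MeasurableSpace β] {μ : Measure α} {ν : Measure β} [IsFiniteMeasure μ] [IsProbabilityMeasure ν]
    {f : α → β → ℝ} (hf : Measurable (uncurry f)) (hf01 : ∀ x y, f x y ∈ unitInterval) :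
    Integrable (fun x => ∫ y, f x y ∂ν) μ :=
  integrable_of_mem_unitInterval (hf.stronglyMeasurable.integral_prod_right' (ν := ν)).measurable
    fun x => integral_mem_unitInterval (hf01 x)

lemma integral_integral_mono {α β : Type*} [MeasurableSpace α] [MeasurableSpace β]
    {μ : Measure α} {ν : Measure β} [SFinite μ] [SFinite ν] {f g : α → β → ℝ}
    (hf : Integrable (uncurry f) (μ.prod ν)) (hg : Integrable (uncurry g) (μ.prod ν))
    (hfg : ∀ x y, f x y ≤ g x y) :
    ∫ x, ∫ y, f x y ∂ν ∂μ ≤ ∫ x, ∫ y, g x y ∂ν ∂μ := by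
  have := integral_mono hf hg fun p => hfg p.1 p.2
  rwa [integral_prod _ hf, integral_prod _ hg] at this

namespace Graphon

variable {α : Type*} [MeasurableSpace α] (μ : Measure α) (W : α → α → ℝ)

noncomputable def degree (x : α) : ℝ := ∫ y, W x y ∂μ

noncomputable def edgeDensity : ℝ := ∫ x, ∫ y, W x y ∂μ ∂μ

noncomputable def triangleDensity : ℝ := ∫ x, ∫ y, ∫ z, W x y * W y z * W z x ∂μ ∂μ ∂μ

variable {μ W}

lemma measurable_degree [SFinite μ] (hW : Measurable (uncurry W)) : Measurable (degree μ W) :=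
  (hW.stronglyMeasurable.integral_prod_right' (ν := μ)).measurable

variable [IsProbabilityMeasure μ]

lemma degree_mem_unitInterval (hW01 : ∀ x y, W x y ∈ Icc 0 1) (x : α) :
    degree μ W x ∈ unitInterval :=
  integral_mem_unitInterval (hW01 x)

lemma measurable_uncurry_triangle (hW : Measurable (uncurry W)) :
    Measurable (uncurry fun (p : α × α) z => W p.1 p.2 * W p.2 z * W z p.1) := by
  have h1 : Measurable fun q : (α × α) × α => W q.1.1 q.1.2 := hW.comp measurable_fst
  have h2 : Measurable fun q : (α × α) × α => W q.1.2 q.2 :=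
    hW.comp (measurable_fst.snd.prodMk measurable_snd)
  have h3 : Measurable fun q : (α × α) × α => W q.2 q.1.1 :=
    hW.comp (measurable_snd.prodMk measurable_fst.fst)
  exact (h1.mul h2).mul h3

lemma integrable_uncurry_mul_degree_add_degree_sub_one (hW : Measurable (uncurry W))
    (hW01 : ∀ x y, W x y ∈ Icc 0 1) :
    Integrable (uncurry fun x y => W x y * (degree μ W x + degree μ W y - 1)) (μ.prod μ) := by
  have hd := measurable_degree (μ := μ) hW
  refine .of_bound (hW.mul (((hd.comp measurable_fst).add (hd.comp measurable_snd)).sub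
    measurable_const)).aestronglyMeasurable 1 (ae_of_all _ fun p => ?_)
  obtain ⟨hdx0, hdx1⟩ := degree_mem_unitInterval (μ := μ) hW01 p.1
  obtain ⟨hdy0, hdy1⟩ := degree_mem_unitInterval (μ := μ) hW01 p.2
  rw [uncurry_def, Real.norm_eq_abs, abs_mul, abs_of_nonneg (hW01 p.1 p.2).1]
  exact mul_le_one₀ (hW01 p.1 p.2).2 (abs_nonneg _) (abs_le.2 ⟨by linarith, by linarith⟩)

lemma mul_degree_add_degree_sub_one_le (hW : Measurable (uncurry W))
    (hsymm : ∀ x y, W x y = W y x) (hW01 : ∀ x y, W x y ∈ Icc 0 1) (x y : α) :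
    W x y * (degree μ W x + degree μ W y - 1) ≤ ∫ z, W x y * W y z * W z x ∂μ := by
  have hint : ∀ x, Integrable (W x) μ := fun x =>
    integrable_of_mem_unitInterval hW.of_uncurry_left (hW01 x)
  have hint_right : Integrable (fun z => W z x) μ :=
    integrable_of_mem_unitInterval hW.of_uncurry_right fun z => hW01 z x
  have hint_add : Integrable (fun z => W y z + W z x) μ := (hint y).add hint_right
  have hdegree : degree μ W x + degree μ W y - 1 = ∫ z, (W y z + W z x - 1) ∂μ := by
    rw [integral_sub hint_add (integrable_const 1), integral_add (hint y) hint_right]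
    simp [degree, hsymm _ x, add_comm]
  rw [hdegree, ← integral_const_mul]
  refine integral_mono ((hint_add.sub (integrable_const 1)).const_mul _) ?_ fun z => ?_
  · exact integrable_of_mem_unitInterval
      ((measurable_const.mul hW.of_uncurry_left).mul hW.of_uncurry_right) fun z =>
        unitInterval.mul_mem (unitInterval.mul_mem (hW01 x y) (hW01 y z)) (hW01 z x)
  · rw [mul_assoc]
    refine mul_le_mul_of_nonneg_left ?_ (hW01 x y).1
    nlinarith [(hW01 y z).2, (hW01 z x).2]

lemma integral_integral_mul_degree (hW : Measurable (uncurry W)) (hsymm : ∀ x y, W x y = W y x)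
    (hW01 : ∀ x y, W x y ∈ Icc 0 1) :
    ∫ x, ∫ y, W x y * degree μ W y ∂μ ∂μ = ∫ x, degree μ W x ^ 2 ∂μ := by
  have hint : Integrable (uncurry fun x y => W x y * degree μ W y) (μ.prod μ) :=
    integrable_of_mem_unitInterval (hW.mul ((measurable_degree hW).comp measurable_snd))
      fun p => unitInterval.mul_mem (hW01 p.1 p.2) (degree_mem_unitInterval hW01 p.2)
  rw [integral_integral_swap hint]
  refine integral_congr_ae (ae_of_all _ fun y => ?_)
  simp only [integral_mul_const, hsymm _ y, sq]
  rfl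

lemma integral_mul_degree_add_degree_sub_one (hW : Measurable (uncurry W))
    (hW01 : ∀ x y, W x y ∈ Icc 0 1) (x : α) :
    ∫ y, W x y * (degree μ W x + degree μ W y - 1) ∂μ =
      degree μ W x ^ 2 + ∫ y, W x y * degree μ W y ∂μ - degree μ W x := by
  have hint : Integrable (W x) μ := integrable_of_mem_unitInterval hW.of_uncurry_left (hW01 x)
  have hint_left : Integrable (fun y => W x y * degree μ W x) μ := hint.mul_const _
  have hint_right : Integrable (fun y => W x y * degree μ W y) μ :=
    integrable_of_mem_unitInterval (hW.of_uncurry_left.mul (measurable_degree hW)) fun y =>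
      unitInterval.mul_mem (hW01 x y) (degree_mem_unitInterval hW01 y)
  calc ∫ y, W x y * (degree μ W x + degree μ W y - 1) ∂μ
      = ∫ y, (W x y * degree μ W x + W x y * degree μ W y - W x y) ∂μ := by
        congr 1 with y
        ring
    _ = degree μ W x ^ 2 + ∫ y, W x y * degree μ W y ∂μ - degree μ W x := by
        have hint_sum : Integrable (fun y => W x y * degree μ W x + W x y * degree μ W y) μ :=
          hint_left.add hint_right
        rw [integral_sub hint_sum hint, integral_add hint_left hint_right,
          integral_mul_const, sq]
        rfl

lemma integral_integral_mul_degree_add_degree_sub_one (hW : Measurable (uncurry W))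
    (hsymm : ∀ x y, W x y = W y x) (hW01 : ∀ x y, W x y ∈ Icc 0 1) :
    ∫ x, ∫ y, W x y * (degree μ W x + degree μ W y - 1) ∂μ ∂μ =
      2 * ∫ x, degree μ W x ^ 2 ∂μ - edgeDensity μ W := by
  have hint : Integrable (degree μ W) μ :=
    integrable_of_mem_unitInterval (measurable_degree hW) (degree_mem_unitInterval hW01)
  have hint_sq : Integrable (fun x => degree μ W x ^ 2) μ :=
    integrable_of_mem_unitInterval ((measurable_degree hW).pow_const 2) fun x => by
      simpa only [sq] using unitInterval.mul_mem (degree_mem_unitInterval hW01 x)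
        (degree_mem_unitInterval hW01 x)
  have hint_mul : Integrable (fun x => ∫ y, W x y * degree μ W y ∂μ) μ :=
    integrable_integral_of_mem_unitInterval (hW.mul ((measurable_degree hW).comp measurable_snd))
      fun x y => unitInterval.mul_mem (hW01 x y) (degree_mem_unitInterval hW01 y)
  simp only [integral_mul_degree_add_degree_sub_one hW hW01]
  have hint_sum : Integrable (fun x => degree μ W x ^ 2 + ∫ y, W x y * degree μ W y ∂μ) μ :=
    hint_sq.add hint_mul
  rw [integral_sub hint_sum hint, integral_add hint_sq hint_mul,
    integral_integral_mul_degree hW hsymm hW01]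
  unfold edgeDensity degree
  ring

theorem edgeDensity_mul_two_mul_edgeDensity_sub_one_le_triangleDensity
    (hW : Measurable (uncurry W)) (hsymm : ∀ x y, W x y = W y x)
    (hW01 : ∀ x y, W x y ∈ Icc 0 1) :
    edgeDensity μ W * (2 * edgeDensity μ W - 1) ≤ triangleDensity μ W := by
  have hcauchy_schwarz : edgeDensity μ W ^ 2 ≤ ∫ x, degree μ W x ^ 2 ∂μ :=
    sq_integral_le_integral_sq
      (memLp_of_mem_unitInterval (measurable_degree hW) (degree_mem_unitInterval hW01))
  have hlower : ∫ x, ∫ y, W x y * (degree μ W x + degree μ W y - 1) ∂μ ∂μ ≤ triangleDensity μ W := by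
    refine integral_integral_mono ?_ ?_ (mul_degree_add_degree_sub_one_le hW hsymm hW01)
    · exact integrable_uncurry_mul_degree_add_degree_sub_one hW hW01
    · exact integrable_integral_of_mem_unitInterval (measurable_uncurry_triangle hW) fun p z =>
        unitInterval.mul_mem (unitInterval.mul_mem (hW01 _ _) (hW01 _ _)) (hW01 _ _)
  rw [integral_integral_mul_degree_add_degree_sub_one hW hsymm hW01] at hlower
  nlinarith

end Graphon

instance isProbabilityMeasure_μ01 : IsProbabilityMeasure μ01 := ⟨by simp [Real.volume_Icc]⟩

/-- Goodman's inequality: `t(K₃,W) ≥ t(K₂,W)·(2·t(K₂,W) − 1)`. -/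
theorem goodman_inequality (W : ℝ → ℝ → ℝ) (hW : IsGraphon W) :
    (∫ x, ∫ y, W x y ∂μ01 ∂μ01) * (2 * (∫ x, ∫ y, W x y ∂μ01 ∂μ01) - 1) ≤
      ∫ x, ∫ y, ∫ z, W x y * W y z * W z x ∂μ01 ∂μ01 ∂μ01 :=
  Graphon.edgeDensity_mul_two_mul_edgeDensity_sub_one_le_triangleDensity hW.1 hW.2.1 hW.2.2
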